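/- (Lemma 1, finite-length form.) Let μ be a pairwise-independent ensemble with M' ≥ 2 codewords and marginal Q. Then for every ρ ≥ 1, every γ > 0, and every message index m, μ[ P_{e,m}(C) ≤ γ^ρ · ( (M' − 1) · ∑_{x,x'∈𝒳^n} Q(x)Q(x')·Z(x,x')^{1/ρ} )^ρ ] ≥ 1 − 1/γ. Equivalently, with probability at least 1 − 1/γ the exponent −(1/n)·log₂ P_{e,m}(C) (interpreted as +∞ when P_{e,m}(C) = 0) exceeds E_x(ρ,Q) − (ρ/n)·log₂(M' − 1) − (ρ/n)·log₂ γ. -/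

import Mathlib

open scoped Classical

/-- `W` is a channel: nonnegative, and each row sums to one. -/
def IsChannel {𝒳 𝒴 : Type*} [Fintype 𝒴] (W : 𝒳 → 𝒴 → ℝ) : Prop :=
  (∀ x y, 0 ≤ W x y) ∧ ∀ x, ∑ y, W x y = 1

/-- Maximum-likelihood error probability of message `m` under code `c`
(ties counted as errors). -/
noncomputable def Pem {𝒳 𝒴 : Type*} [Fintype 𝒴] {M : ℕ}
    (W : 𝒳 → 𝒴 → ℝ) (c : Fin M → 𝒳) (m : Fin M) : ℝ :=
  ∑ y, W (c m) y * (if ∃ k, k ≠ m ∧ W (c m) y ≤ W (c k) y then (1:ℝ) else 0)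

/-- Bhattacharyya coefficient between inputs `x` and `x'`. -/
noncomputable def Bhat {𝒳 𝒴 : Type*} [Fintype 𝒴] (W : 𝒳 → 𝒴 → ℝ) (x x' : 𝒳) : ℝ :=
  ∑ y, Real.sqrt (W x y * W x' y)

/-- `p` is a probability mass function on a finite type. -/
def IsPMF {α : Type*} [Fintype α] (p : α → ℝ) : Prop :=
  (∀ a, 0 ≤ p a) ∧ ∑ a, p a = 1

/-- Probability of the event `S` under the pmf `μ`. -/
noncomputable def pmfProb {α : Type*} [Fintype α] (μ : α → ℝ) (S : α → Prop) : ℝ :=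
  ∑ a, if S a then μ a else 0

/-- Expectation of `f` under the pmf `μ`. -/
noncomputable def pmfExp {α : Type*} [Fintype α] (μ : α → ℝ) (f : α → ℝ) : ℝ :=
  ∑ a, μ a * f a

/-- `μ` is a pairwise-independent ensemble of `M` codewords with marginal `Q`:
each codeword has law `Q` and each pair of distinct codewords has law `Q × Q`. -/
def PairwiseIndepEnsemble {𝒳 : Type*} [Fintype 𝒳] {M : ℕ}
    (μ : (Fin M → 𝒳) → ℝ) (Q : 𝒳 → ℝ) : Prop :=
  IsPMF μ ∧ IsPMF Q ∧
  (∀ (m : Fin M) (x : 𝒳), pmfProb μ (fun c => c m = x) = Q x) ∧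
  (∀ (m k : Fin M), m ≠ k → ∀ (x x' : 𝒳),
    pmfProb μ (fun c => c m = x ∧ c k = x') = Q x * Q x')

/-! By the union bound and `W(y|x_m) · 1{W(y|x_m) ≤ W(y|x_k)} ≤ √(W(y|x_m) W(y|x_k))`, the error
probability of message `m` is at most `∑_{k ≠ m} Z(x_m, x_k)`; since `t ↦ t^{1/ρ}` is subadditive for `ρ ≥ 1`,
this is at most `U^ρ` with `U = ∑_{k ≠ m} Z(x_m, x_k)^{1/ρ}`. Pairwise independence gives
`𝔼 U = (M' - 1) ∑ Q(x) Q(x') Z(x,x')^{1/ρ}`, and Markov's inequality bounds `U` by `γ 𝔼 U`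
with probability at least `1 - 1/γ`. -/

theorem Real.rpow_sum_le_sum_rpow {ι : Type*} (s : Finset ι) {f : ι → ℝ}
    (hf : ∀ i ∈ s, 0 ≤ f i) {p : ℝ} (hp0 : 0 < p) (hp1 : p ≤ 1) :
    (∑ i ∈ s, f i) ^ p ≤ ∑ i ∈ s, f i ^ p :=
  Finset.le_sum_of_subadditive_on_pred (· ^ p) (0 ≤ ·) (Real.zero_rpow hp0.ne').le
    (fun _ _ hx hy => Real.rpow_add_le_add_rpow hx hy hp0.le hp1)
    (fun _ _ => add_nonneg) f hf

theorem Real.sum_le_rpow_sum_rpow_one_div {ι : Type*} (s : Finset ι) {f : ι → ℝ}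
    (hf : ∀ i ∈ s, 0 ≤ f i) {ρ : ℝ} (hρ : 1 ≤ ρ) :
    ∑ i ∈ s, f i ≤ (∑ i ∈ s, f i ^ (1 / ρ)) ^ ρ := by
  have hρ0 : 0 < ρ := by linarith
  calc ∑ i ∈ s, f i = ((∑ i ∈ s, f i) ^ (1 / ρ)) ^ ρ := by
        rw [one_div, Real.rpow_inv_rpow (Finset.sum_nonneg hf) hρ0.ne']
    _ ≤ (∑ i ∈ s, f i ^ (1 / ρ)) ^ ρ := by
        gcongr
        · exact Real.rpow_nonneg (Finset.sum_nonneg hf) _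
        · exact Real.rpow_sum_le_sum_rpow s hf (one_div_pos.2 hρ0) ((div_le_one hρ0).2 hρ)

section Pmf

variable {α : Type*} [Fintype α] {μ : α → ℝ}

theorem pmfProb_mono (hμ : ∀ a, 0 ≤ μ a) {S T : α → Prop} (hST : ∀ a, S a → T a) :
    pmfProb μ S ≤ pmfProb μ T :=
  Finset.sum_le_sum fun a _ => by
    by_cases hS : S a
    · simp [hS, hST a hS]
    · by_cases hT : T a <;> simp [hS, hT, hμ a]

theorem pmfProb_add_pmfProb_not (hμ : IsPMF μ) (S : α → Prop) :
    pmfProb μ S + pmfProb μ (fun a => ¬ S a) = 1 := by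
  rw [pmfProb, pmfProb, ← Finset.sum_add_distrib, ← hμ.2]
  exact Finset.sum_congr rfl fun a _ => by by_cases hS : S a <;> simp [hS]

theorem pmfExp_nonneg (hμ : ∀ a, 0 ≤ μ a) {U : α → ℝ} (hU : ∀ a, 0 ≤ U a) :
    0 ≤ pmfExp μ U :=
  Finset.sum_nonneg fun a _ => mul_nonneg (hμ a) (hU a)

theorem pmfExp_finset_sum {ι : Type*} (s : Finset ι) (F : ι → α → ℝ) :
    pmfExp μ (fun a => ∑ i ∈ s, F i a) = ∑ i ∈ s, pmfExp μ (F i) := by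
  simp only [pmfExp, Finset.mul_sum]
  exact Finset.sum_comm

theorem pmfExp_comp {β : Type*} [Fintype β] (φ : α → β) (g : β → ℝ) :
    pmfExp μ (fun a => g (φ a)) = ∑ b, pmfProb μ (fun a => φ a = b) * g b := by
  simp only [pmfExp, pmfProb, Finset.sum_mul, ite_mul, zero_mul]
  rw [Finset.sum_comm]
  simp [Finset.sum_ite_eq]

theorem pmfProb_lt_le_pmfExp_div (hμ : ∀ a, 0 ≤ μ a) {U : α → ℝ} (hU : ∀ a, 0 ≤ U a)
    {t : ℝ} (ht : 0 < t) :
    pmfProb μ (fun a => t < U a) ≤ pmfExp μ U / t := by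
  rw [le_div_iff₀ ht, pmfProb, Finset.sum_mul]
  refine Finset.sum_le_sum fun a _ => ?_
  split_ifs with h
  · exact mul_le_mul_of_nonneg_left h.le (hμ a)
  · rw [zero_mul]
    exact mul_nonneg (hμ a) (hU a)

theorem pmfProb_pos_eq_zero_of_pmfExp_eq_zero (hμ : ∀ a, 0 ≤ μ a) {U : α → ℝ}
    (hU : ∀ a, 0 ≤ U a) (h : pmfExp μ U = 0) :
    pmfProb μ (fun a => 0 < U a) = 0 := by
  have h0 := (Finset.sum_eq_zero_iff_of_nonneg fun a _ => mul_nonneg (hμ a) (hU a)).1 h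
  refine Finset.sum_eq_zero fun a ha => ?_
  split_ifs with hpos
  · exact (mul_eq_zero.1 (h0 a ha)).resolve_right hpos.ne'
  · rfl

theorem one_sub_inv_le_pmfProb_le_mul_pmfExp (hμ : IsPMF μ) {U : α → ℝ} (hU : ∀ a, 0 ≤ U a)
    {γ : ℝ} (hγ : 0 < γ) :
    1 - 1 / γ ≤ pmfProb μ (fun a => U a ≤ γ * pmfExp μ U) := by
  have htail : pmfProb μ (fun a => γ * pmfExp μ U < U a) ≤ 1 / γ := by
    rcases (pmfExp_nonneg hμ.1 hU).eq_or_lt with h0 | hpos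
    · rw [← h0, mul_zero, pmfProb_pos_eq_zero_of_pmfExp_eq_zero hμ.1 hU h0.symm]
      positivity
    · calc _ ≤ pmfExp μ U / (γ * pmfExp μ U) := pmfProb_lt_le_pmfExp_div hμ.1 hU (by positivity)
        _ = 1 / γ := by field_simp
  have hsplit := pmfProb_add_pmfProb_not hμ (fun a => U a ≤ γ * pmfExp μ U)
  simp only [not_le] at hsplit
  linarith

end Pmf

namespace PairwiseIndepEnsemble

variable {𝒳 : Type*} [Fintype 𝒳] {M : ℕ} {μ : (Fin M → 𝒳) → ℝ} {Q : 𝒳 → ℝ}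

theorem pmfExp_pair (hμ : PairwiseIndepEnsemble μ Q) {m k : Fin M} (hmk : m ≠ k)
    (g : 𝒳 → 𝒳 → ℝ) :
    pmfExp μ (fun c => g (c m) (c k)) = ∑ x, ∑ x', Q x * Q x' * g x x' := by
  refine (pmfExp_comp (fun c : Fin M → 𝒳 => (c m, c k)) (fun p => g p.1 p.2)).trans ?_
  rw [Fintype.sum_prod_type]
  simp only [Prod.mk.injEq, hμ.2.2.2 m k hmk]

theorem pmfExp_sum_erase (hμ : PairwiseIndepEnsemble μ Q) (m : Fin M) (g : 𝒳 → 𝒳 → ℝ) :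
    pmfExp μ (fun c => ∑ k ∈ Finset.univ.erase m, g (c m) (c k)) =
      ((M : ℝ) - 1) * ∑ x, ∑ x', Q x * Q x' * g x x' := by
  rw [pmfExp_finset_sum, Finset.sum_congr rfl fun k hk =>
    hμ.pmfExp_pair (Finset.ne_of_mem_erase hk).symm g, Finset.sum_const,
    Finset.card_erase_of_mem (Finset.mem_univ m), Finset.card_univ, Fintype.card_fin,
    nsmul_eq_mul, Nat.cast_pred m.pos]

end PairwiseIndepEnsemble

section Channel

variable {𝒳 𝒴 : Type*} [Fintype 𝒴] {W : 𝒳 → 𝒴 → ℝ}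

theorem Bhat_nonneg (x x' : 𝒳) : 0 ≤ Bhat W x x' :=
  Finset.sum_nonneg fun _ _ => Real.sqrt_nonneg _

theorem Pem_le_sum_Bhat (hW : ∀ x y, 0 ≤ W x y) {M : ℕ} (c : Fin M → 𝒳) (m : Fin M) :
    Pem W c m ≤ ∑ k ∈ Finset.univ.erase m, Bhat W (c m) (c k) := by
  unfold Pem Bhat
  rw [Finset.sum_comm]
  refine Finset.sum_le_sum fun y _ => ?_
  split_ifs with h
  · obtain ⟨k, hkm, hle⟩ := h
    calc W (c m) y * 1 ≤ Real.sqrt (W (c m) y * W (c k) y) := by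
          rw [mul_one, Real.le_sqrt (hW _ _) (mul_nonneg (hW _ _) (hW _ _)), sq]
          exact mul_le_mul_of_nonneg_left hle (hW _ _)
      _ ≤ ∑ k ∈ Finset.univ.erase m, Real.sqrt (W (c m) y * W (c k) y) :=
          Finset.single_le_sum (f := fun k => Real.sqrt (W (c m) y * W (c k) y))
            (fun _ _ => Real.sqrt_nonneg _) (Finset.mem_erase.2 ⟨hkm, Finset.mem_univ k⟩)
  · rw [mul_zero]
    exact Finset.sum_nonneg fun _ _ => Real.sqrt_nonneg _

theorem Pem_le_rpow_sum_Bhat_rpow (hW : ∀ x y, 0 ≤ W x y) {M : ℕ} (c : Fin M → 𝒳)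
    (m : Fin M) {ρ : ℝ} (hρ : 1 ≤ ρ) :
    Pem W c m ≤ (∑ k ∈ Finset.univ.erase m, Bhat W (c m) (c k) ^ (1 / ρ)) ^ ρ :=
  (Pem_le_sum_Bhat hW c m).trans
    (Real.sum_le_rpow_sum_rpow_one_div _ (fun _ _ => Bhat_nonneg _ _) hρ)

end Channel

theorem lemma1_finite_length_general
    {𝒳 𝒴 : Type*} [Fintype 𝒳] [Fintype 𝒴]
    (n : ℕ)
    (W : (Fin n → 𝒳) → (Fin n → 𝒴) → ℝ) (hW : IsChannel W)
    (Q : (Fin n → 𝒳) → ℝ) (M' : ℕ)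
    (μ : (Fin M' → (Fin n → 𝒳)) → ℝ) (hμ : PairwiseIndepEnsemble μ Q)
    (ρ : ℝ) (hρ : 1 ≤ ρ) (γ : ℝ) (hγ : 0 < γ) (m : Fin M') :
    1 - 1/γ ≤ pmfProb μ (fun c =>
      Pem W c m ≤
        γ ^ ρ * (((M' : ℝ) - 1) * ∑ x, ∑ x', Q x * Q x' * Bhat W x x' ^ (1/ρ)) ^ ρ) := by
  set U : (Fin M' → (Fin n → 𝒳)) → ℝ :=
    fun c => ∑ k ∈ Finset.univ.erase m, Bhat W (c m) (c k) ^ (1 / ρ)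
  have hU : ∀ c, 0 ≤ U c := fun c =>
    Finset.sum_nonneg fun _ _ => Real.rpow_nonneg (Bhat_nonneg _ _) _
  rw [← hμ.pmfExp_sum_erase m (fun x x' => Bhat W x x' ^ (1 / ρ))]
  refine (one_sub_inv_le_pmfProb_le_mul_pmfExp hμ.1 hU hγ).trans
    (pmfProb_mono hμ.1.1 fun c hc => ?_)
  calc Pem W c m ≤ U c ^ ρ := Pem_le_rpow_sum_Bhat_rpow hW.1 c m hρ
    _ ≤ (γ * pmfExp μ U) ^ ρ := Real.rpow_le_rpow (hU c) hc (by linarith)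
    _ = γ ^ ρ * pmfExp μ U ^ ρ := Real.mul_rpow hγ.le (pmfExp_nonneg hμ.1.1 hU)

/-- Lemma 1, finite-length form: with probability at least `1 - 1/γ`,
the ML error probability of message `m` is at most
`γ^ρ * ((M'-1) * ∑_{x,x'} Q x Q x' Z(x,x')^{1/ρ})^ρ`. -/
theorem lemma1_finite_length
    {𝒳 𝒴 : Type*} [Fintype 𝒳] [Fintype 𝒴] [Nonempty 𝒳] [Nonempty 𝒴]
    (n : ℕ) (hn : 1 ≤ n)
    (W : (Fin n → 𝒳) → (Fin n → 𝒴) → ℝ) (hW : IsChannel W)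
    (Q : (Fin n → 𝒳) → ℝ) (M' : ℕ) (hM' : 2 ≤ M')
    (μ : (Fin M' → (Fin n → 𝒳)) → ℝ) (hμ : PairwiseIndepEnsemble μ Q)
    (ρ : ℝ) (hρ : 1 ≤ ρ) (γ : ℝ) (hγ : 0 < γ) (m : Fin M') :
    1 - 1/γ ≤ pmfProb μ (fun c =>
      Pem W c m ≤
        γ ^ ρ * (((M' : ℝ) - 1) * ∑ x, ∑ x', Q x * Q x' * Bhat W x x' ^ (1/ρ)) ^ ρ) :=
  lemma1_finite_length_general n W hW Q M' μ hμ ρ hρ γ hγ m
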